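/- arXiv:math/0502029 — 3 statements merged into one kernel-verified Lean document; each statement's English description precedes it below -/
import Mathlib

section
/- Let A be a 2m×m complex matrix and let φ : ℂ^m → (ℂ*)^{2m} be the group homomorphism φ(z) = (exp((Az)_1), …, exp((Az)_{2m})). Assume φ is injective and let G = φ(ℂ^m). Then G is a closed subset of (ℂ*)^{2m} if and only if the real 2m×2m matrix (Re A | Im A) is invertible. -/
/-! Let `K = {z | Re (A z) = 0}`. Under the change of real coordinates `u ↦ (u_j - i u_{m+j})_j`
the matrix `(Re A | Im A)` becomes the map `z ↦ Re (A z)`, so it is invertible iff `K = 0`.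

If `K = 0`, the map `z ↦ Re (A z)` has a linear left inverse `L`, and `g ↦ L (log |g_k|)_k` is a
continuous left inverse of `φ`; hence `φ` has closed range.

If `K ≠ 0`, then `φ` maps `K` injectively onto `G ∩ (S¹)^{2m}`, which is the image of `K` in the
torus `(ℝ / 2πℤ)^{2m}` under `z ↦ Im (A z)`. Were `G` closed, this image would be a compact
group, and the open mapping theorem for σ-compact groups would make `K` homeomorphic to it;
but a nonzero real vector space is not compact. -/

/-- The group homomorphism `φ : ℂ^m → (ℂ*)^{2m}`, `φ(z) = (exp((Az)_1), …, exp((Az)_{2m}))`,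
associated with a `2m × m` complex matrix `A`. -/
noncomputable def expMap {m : ℕ} (A : Matrix (Fin (2 * m)) (Fin m) ℂ)
    (z : Fin m → ℂ) : Fin (2 * m) → ℂˣ :=
  fun k => Units.mk0 (Complex.exp (A.mulVec z k)) (Complex.exp_ne_zero _)

/-- The real `2m × 2m` matrix `(Re A | Im A)` whose first `m` columns are the real parts of
the columns of `A` and whose last `m` columns are the imaginary parts of the columns of `A`. -/
def reImMat {m : ℕ} (A : Matrix (Fin (2 * m)) (Fin m) ℂ) :
    Matrix (Fin (2 * m)) (Fin (2 * m)) ℝ :=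
  Matrix.of fun i j =>
    if h : (j : ℕ) < m then (A i ⟨j, h⟩).re
    else (A i ⟨(j : ℕ) - m, by omega⟩).im

open Set Matrix Complex Real

theorem AddMonoidHom.not_isClosed_range_of_injective {E H : Type*} [AddGroup E]
    [TopologicalSpace E] [IsTopologicalAddGroup E] [SigmaCompactSpace E] [NoncompactSpace E]
    [AddGroup H] [TopologicalSpace H] [IsTopologicalAddGroup H] [CompactSpace H] [T2Space H]
    (f : E →+ H) (hf : Continuous f) (hinj : Function.Injective f) :
    ¬ IsClosed (Set.range f) := by
  intro hclosed
  have : CompactSpace f.range := isCompact_iff_compactSpace.mp hclosed.isCompact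
  have hcont : Continuous f.rangeRestrict := hf.subtype_mk _
  have hopen := f.rangeRestrict.isOpenMap_of_sigmaCompact f.rangeRestrict_surjective hcont
  let e := (Equiv.ofBijective _ ⟨f.rangeRestrict_injective_iff.mpr hinj,
    f.rangeRestrict_surjective⟩).toHomeomorphOfContinuousOpen hcont hopen
  exact not_compactSpace_iff.mpr ‹_› e.symm.compactSpace

section GeneralMatrix

variable {ι κ : Type*} [Fintype κ]

noncomputable def reMulVec (A : Matrix ι κ ℂ) : (κ → ℂ) →ₗ[ℝ] (ι → ℝ) :=
  reLm.compLeft ι ∘ₗ (mulVecLin A).restrictScalars ℝ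

@[simp] lemma reMulVec_apply (A : Matrix ι κ ℂ) (z : κ → ℂ) (i : ι) :
    reMulVec A z i = ((A *ᵥ z) i).re := rfl

instance : Fact (0 < 2 * π) := ⟨two_pi_pos⟩

noncomputable def imAngle (A : Matrix ι κ ℂ) : (κ → ℂ) →+ (ι → AddCircle (2 * π)) where
  toFun z k := (((A *ᵥ z) k).im : AddCircle (2 * π))
  map_zero' := by ext; simp
  map_add' z w := by funext k; simp [mulVec_add]

lemma continuous_imAngle (A : Matrix ι κ ℂ) : Continuous (imAngle A) :=
  continuous_pi fun k => (AddCircle.continuous_mk' (2 * π)).comp (by fun_prop :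
    Continuous fun z : κ → ℂ => ((A *ᵥ z) k).im)

noncomputable def torusToUnits (x : ι → AddCircle (2 * π)) : ι → ℂˣ :=
  fun k => Circle.toUnits (AddCircle.toCircle (x k))

lemma continuous_torusToUnits : Continuous (torusToUnits (ι := ι)) :=
  continuous_pi fun k => Units.isEmbedding_val₀.continuous_iff.mpr <|
    continuous_subtype_val.comp (AddCircle.continuous_toCircle.comp (continuous_apply k))

lemma torusToUnits_injective : Function.Injective (torusToUnits (ι := ι)) := by
  intro x y h
  funext k
  exact AddCircle.injective_toCircle two_pi_pos.ne' <| Circle.coe_injective <|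
    congrArg Units.val (congrFun h k)

lemma norm_torusToUnits (x : ι → AddCircle (2 * π)) (k : ι) : ‖(torusToUnits x k : ℂ)‖ = 1 :=
  Circle.norm_coe _

end GeneralMatrix

section ExpMap

def finSumFinEquivTwoMul (m : ℕ) : Fin m ⊕ Fin m ≃ Fin (2 * m) :=
  finSumFinEquiv.trans (finCongr (two_mul m).symm)

variable {m : ℕ} (A : Matrix (Fin (2 * m)) (Fin m) ℂ)

@[simp] lemma reImMat_apply_inl (i : Fin (2 * m)) (j : Fin m) :
    reImMat A i (finSumFinEquivTwoMul m (.inl j)) = (A i j).re := by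
  simp [reImMat, finSumFinEquivTwoMul]

@[simp] lemma reImMat_apply_inr (i : Fin (2 * m)) (j : Fin m) :
    reImMat A i (finSumFinEquivTwoMul m (.inr j)) = (A i j).im := by
  simp [reImMat, finSumFinEquivTwoMul]

noncomputable def reImEquiv (m : ℕ) : (Fin (2 * m) → ℝ) ≃ (Fin m → ℂ) where
  toFun u j := ⟨u (finSumFinEquivTwoMul m (.inl j)), -u (finSumFinEquivTwoMul m (.inr j))⟩
  invFun z k :=
    Sum.elim (fun j => (z j).re) (fun j => -(z j).im) ((finSumFinEquivTwoMul m).symm k)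
  left_inv u := by
    funext k
    obtain ⟨s | s, rfl⟩ := (finSumFinEquivTwoMul m).surjective k <;> simp
  right_inv z := by
    funext j
    simp

lemma reImMat_mulVec (u : Fin (2 * m) → ℝ) : reImMat A *ᵥ u = reMulVec A (reImEquiv m u) := by
  funext i
  simp only [mulVec, dotProduct, reMulVec_apply, ← (finSumFinEquivTwoMul m).sum_comp,
    Fintype.sum_sum_type, reImMat_apply_inl, reImMat_apply_inr, reImEquiv]
  simp [Finset.sum_add_distrib]

lemma isUnit_reImMat_iff_injective_reMulVec :
    IsUnit (reImMat A) ↔ Function.Injective (reMulVec A) := by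
  rw [← mulVec_injective_iff_isUnit, show (reImMat A).mulVec = reMulVec A ∘ reImEquiv m from
    funext (reImMat_mulVec A), EquivLike.injective_comp]

lemma continuous_expMap : Continuous (expMap A) :=
  continuous_pi fun k => Units.isEmbedding_val₀.continuous_iff.mpr <| by
    simp only [Function.comp_def, expMap, Units.val_mk0]
    fun_prop

lemma log_norm_expMap (z : Fin m → ℂ) (k : Fin (2 * m)) :
    Real.log ‖(expMap A z k : ℂ)‖ = reMulVec A z k := by
  simp [expMap, norm_exp]

lemma isClosed_range_expMap_of_injective (h : Function.Injective (reMulVec A)) :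
    IsClosed (range (expMap A)) := by
  obtain ⟨L, hL⟩ := (reMulVec A).exists_leftInverse_of_injective (LinearMap.ker_eq_bot.mpr h)
  have hψ : Continuous fun g : Fin (2 * m) → ℂˣ => L fun k => Real.log ‖(g k : ℂ)‖ :=
    L.continuous_of_finiteDimensional.comp <| continuous_pi fun k =>
      ((Units.continuous_val.comp (continuous_apply k)).norm).log fun g => by simp
  refine Function.LeftInverse.isClosed_range (fun z => ?_) hψ (continuous_expMap A)
  simp only [log_norm_expMap]
  exact LinearMap.congr_fun hL z

lemma torusToUnits_imAngle {z : Fin m → ℂ} (hz : z ∈ LinearMap.ker (reMulVec A)) :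
    torusToUnits (imAngle A z) = expMap A z := by
  funext k
  have hre : ((A *ᵥ z) k).re = 0 := congrFun hz k
  apply Units.ext
  simp only [torusToUnits, imAngle, expMap, AddMonoidHom.coe_mk, ZeroHom.coe_mk,
    AddCircle.toCircle_apply_mk, Circle.toUnits_apply, Units.val_mk0, Circle.coe_exp,
    div_self two_pi_pos.ne', one_mul]
  conv_rhs => rw [← re_add_im ((A *ᵥ z) k), hre, ofReal_zero, zero_add]

lemma range_imAngle_ker :
    range ((imAngle A).comp (LinearMap.ker (reMulVec A)).subtype.toAddMonoidHom) =
      torusToUnits ⁻¹' range (expMap A) := by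
  ext x
  constructor
  · rintro ⟨⟨z, hz⟩, rfl⟩
    exact ⟨z, (torusToUnits_imAngle A hz).symm⟩
  · rintro ⟨z, hzx⟩
    have hz : z ∈ LinearMap.ker (reMulVec A) := by
      funext k
      rw [← log_norm_expMap, hzx, norm_torusToUnits, Real.log_one]
      rfl
    exact ⟨⟨z, hz⟩, torusToUnits_injective (by simpa [hzx] using torusToUnits_imAngle A hz)⟩

lemma injective_imAngle_ker (hinj : Function.Injective (expMap A)) :
    Function.Injective ((imAngle A).comp (LinearMap.ker (reMulVec A)).subtype.toAddMonoidHom) := by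
  rintro ⟨z, hz⟩ ⟨w, hw⟩ h
  refine Subtype.ext (hinj ?_)
  rw [← torusToUnits_imAngle A hz, ← torusToUnits_imAngle A hw]
  exact congrArg torusToUnits h

lemma injective_reMulVec_of_isClosed_range (hinj : Function.Injective (expMap A))
    (hG : IsClosed (range (expMap A))) : Function.Injective (reMulVec A) := by
  rw [← LinearMap.ker_eq_bot]
  by_contra hK
  have : Nontrivial (LinearMap.ker (reMulVec A)) := Submodule.nontrivial_iff_ne_bot.mpr hK
  refine AddMonoidHom.not_isClosed_range_of_injective
    ((imAngle A).comp (LinearMap.ker (reMulVec A)).subtype.toAddMonoidHom)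
    ((continuous_imAngle A).comp continuous_subtype_val) (injective_imAngle_ker A hinj) ?_
  rw [range_imAngle_ker]
  exact hG.preimage continuous_torusToUnits

end ExpMap

/-- Let `A` be a `2m × m` complex matrix and `φ : ℂ^m → (ℂ*)^{2m}`,
`φ(z) = (exp((Az)_1), …, exp((Az)_{2m}))`, assumed injective.  Then the image
`G = φ(ℂ^m)` is closed in `(ℂ*)^{2m}` if and only if the real `2m × 2m` matrix
`(Re A | Im A)` is invertible. -/
theorem isClosed_range_expMap_iff_isUnit_reImMat
    (m : ℕ) (A : Matrix (Fin (2 * m)) (Fin m) ℂ)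
    (hinj : Function.Injective (expMap A)) :
    IsClosed (Set.range (expMap A) : Set (Fin (2 * m) → ℂˣ)) ↔ IsUnit (reImMat A) := by
  rw [isUnit_reImMat_iff_injective_reMulVec]
  exact ⟨injective_reMulVec_of_isClosed_range A hinj, isClosed_range_expMap_of_injective A⟩
end

section
/- Let W be a real linear subspace of ℂ^k and let exp : ℂ^k → (ℂ*)^k denote the componentwise complex exponential (a surjective group homomorphism with kernel (2πi ℤ)^k). Assume W ∩ (2πi ℤ)^k = {0}. Then exp(W) is a closed subset of (ℂ*)^k if and only if W ∩ (iℝ)^k = {0}, where (iℝ)^k denotes the set of vectors in ℂ^k all of whose coordinates are purely imaginary. -/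
open Complex

/-- The componentwise complex exponential `exp : ℂ^k → (ℂ*)^k`. -/
noncomputable def expPi {k : ℕ} (v : Fin k → ℂ) : Fin k → ℂˣ :=
  fun i => Units.mk0 (Complex.exp (v i)) (Complex.exp_ne_zero _)

/-!
If `re` is injective on `W`, the moduli of the coordinates of `expPi w` determine `w ∈ W`
through a continuous linear left inverse of `re`, so `expPi '' W` is the fixed-point set of a
continuous self-map of `(ℂˣ)^k`, hence closed. Conversely, if `expPi '' W` is closed, then
`expPi` is an injective continuous homomorphism from `W` onto a closed, hence locally compact,
subgroup; by the open mapping theorem it is a closed embedding. The preimage of the compact torus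
`|uᵢ| = 1` is then compact, but it contains the whole line `ℝ • v` for any purely imaginary
`v ∈ W`, so `v = 0`.
-/

open Topology

theorem MonoidHom.isClosedEmbedding_of_isClosed_range {G H : Type*}
    [Group G] [TopologicalSpace G] [IsTopologicalGroup G] [SigmaCompactSpace G]
    [Group H] [TopologicalSpace H] [IsTopologicalGroup H] [LocallyCompactSpace H] [T2Space H]
    (f : G →* H) (hf : Continuous f)
    (hinj : Function.Injective f) (hrange : IsClosed (Set.range f)) : IsClosedEmbedding f := by
  have : LocallyCompactSpace f.range := by
    rw [← f.coe_range] at hrange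
    exact hrange.locallyCompactSpace
  have hcont : Continuous f.rangeRestrict := hf.subtype_mk _
  have hopen : IsOpenMap f.rangeRestrict :=
    f.rangeRestrict.isOpenMap_of_sigmaCompact f.rangeRestrict_surjective hcont
  have hemb : IsEmbedding f.rangeRestrict :=
    (IsOpenEmbedding.of_continuous_injective_isOpenMap hcont
      (f.rangeRestrict_injective_iff.2 hinj) hopen).isEmbedding
  exact ⟨IsEmbedding.subtypeVal.comp hemb, hrange⟩

lemma isCompact_setOf_norm_val_eq_one : IsCompact {u : ℂˣ | ‖(u : ℂ)‖ = 1} := by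
  rw [Units.isEmbedding_val₀.isCompact_iff]
  convert isCompact_sphere (0 : ℂ) 1
  ext z
  refine ⟨?_, fun hz => ⟨Units.mk0 z ?_, ?_, rfl⟩⟩
  · rintro ⟨u, hu, rfl⟩
    simpa using hu
  · rintro rfl
    simp at hz
  · simpa using hz

lemma isCompact_setOf_forall_norm_val_eq_one (ι : Type*) :
    IsCompact {u : ι → ℂˣ | ∀ i, ‖(u i : ℂ)‖ = 1} := by
  simpa [Set.pi] using isCompact_univ_pi fun _ : ι => isCompact_setOf_norm_val_eq_one

section expPi

variable {k : ℕ}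

lemma continuous_expPi : Continuous (expPi (k := k)) :=
  continuous_pi fun i => Units.isEmbedding_val₀.continuous_iff.2 <| by
    simpa [Function.comp_def, expPi] using Complex.continuous_exp.comp (continuous_apply i)

lemma expPi_add (v w : Fin k → ℂ) : expPi (v + w) = expPi v * expPi w := by
  ext i
  simp [expPi, Complex.exp_add]

lemma log_norm_expPi (v : Fin k → ℂ) (i : Fin k) :
    Real.log ‖(expPi v i : ℂ)‖ = (v i).re := by
  simp [expPi, Complex.norm_exp]

lemma expPi_injOn {W : Submodule ℝ (Fin k → ℂ)}
    (hW : ∀ v ∈ W, (∀ i : Fin k, ∃ q : ℤ, v i = 2 * Real.pi * Complex.I * q) → v = 0) :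
    Set.InjOn expPi (W : Set (Fin k → ℂ)) := by
  intro v hv w hw hvw
  refine sub_eq_zero.1 (hW _ (W.sub_mem hv hw) fun i => ?_)
  have hexp : Complex.exp (v i - w i) = 1 := by
    rw [Complex.exp_sub, div_eq_one_iff_eq (Complex.exp_ne_zero _)]
    simpa [expPi] using congrArg (fun u => (u i : ℂ)) hvw
  obtain ⟨n, hn⟩ := Complex.exp_eq_one_iff.1 hexp
  exact ⟨n, by rw [Pi.sub_apply, hn]; ring⟩

noncomputable def expPiOn (W : Submodule ℝ (Fin k → ℂ)) :
    Multiplicative W →* (Fin k → ℂˣ) where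
  toFun w := expPi (w.toAdd : Fin k → ℂ)
  map_one' := by ext; simp [expPi]
  map_mul' a b := expPi_add _ _

lemma range_expPiOn (W : Submodule ℝ (Fin k → ℂ)) :
    Set.range (expPiOn W) = expPi '' (W : Set (Fin k → ℂ)) := by
  ext u
  constructor
  · rintro ⟨w, rfl⟩
    exact ⟨_, w.toAdd.2, rfl⟩
  · rintro ⟨v, hv, rfl⟩
    exact ⟨Multiplicative.ofAdd ⟨v, hv⟩, rfl⟩

lemma isClosed_expPi_image_of_eq_zero_of_re_eq_zero {W : Submodule ℝ (Fin k → ℂ)}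
    (h : ∀ v ∈ W, (∀ i : Fin k, (v i).re = 0) → v = 0) :
    IsClosed (expPi '' (W : Set (Fin k → ℂ))) := by
  let reW : W →ₗ[ℝ] (Fin k → ℝ) :=
    (LinearMap.pi fun i => Complex.reLm.comp (LinearMap.proj i)).comp W.subtype
  have hreW : LinearMap.ker reW = ⊥ := by
    refine LinearMap.ker_eq_bot'.2 fun w hw => Subtype.ext (h w w.2 fun i => ?_)
    exact congrFun hw i
  obtain ⟨M, hM⟩ := reW.exists_leftInverse_of_injective hreW
  let logNorm (u : Fin k → ℂˣ) (i : Fin k) : ℝ := Real.log ‖(u i : ℂ)‖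
  have hlogNorm : Continuous logNorm :=
    continuous_pi fun i => (continuous_norm.comp (Units.continuous_val.comp
      (continuous_apply i))).log fun u => by simp
  have hlog : ∀ w : W, M (logNorm (expPi w)) = w := fun w => by
    have : logNorm (expPi w) = reW w := funext fun i => log_norm_expPi _ i
    rw [this]
    exact LinearMap.congr_fun hM w
  have hfix :
      expPi '' (W : Set (Fin k → ℂ)) = {u | expPi (M (logNorm u) : Fin k → ℂ) = u} := by
    ext u
    constructor
    · rintro ⟨v, hv, rfl⟩
      exact congrArg (fun w : W => expPi (w : Fin k → ℂ)) (hlog ⟨v, hv⟩)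
    · intro hu
      exact ⟨_, (M (logNorm u)).2, hu⟩
  rw [hfix]
  exact isClosed_eq (continuous_expPi.comp (continuous_subtype_val.comp
    (M.continuous_of_finiteDimensional.comp hlogNorm))) continuous_id

lemma eq_zero_of_re_eq_zero_of_isClosed_expPi_image {W : Submodule ℝ (Fin k → ℂ)}
    (hW : ∀ v ∈ W, (∀ i : Fin k, ∃ q : ℤ, v i = 2 * Real.pi * Complex.I * q) → v = 0)
    (hcl : IsClosed (expPi '' (W : Set (Fin k → ℂ)))) {v : Fin k → ℂ} (hv : v ∈ W)
    (hre : ∀ i, (v i).re = 0) : v = 0 := by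
  by_contra hv0
  have hemb : IsClosedEmbedding (expPiOn W) := by
    refine (expPiOn W).isClosedEmbedding_of_isClosed_range
      (continuous_expPi.comp continuous_subtype_val) ?_ (by rwa [range_expPiOn])
    exact fun a b hab => Subtype.ext ((expPi_injOn hW) a.toAdd.2 b.toAdd.2 hab)
  have hK := (hemb.isCompact_preimage (isCompact_setOf_forall_norm_val_eq_one (Fin k))).image
    (continuous_subtype_val.comp continuous_toAdd)
  obtain ⟨C, hC⟩ := isBounded_iff_forall_norm_le.1 hK.isBounded
  have hvpos : 0 < ‖v‖ := norm_pos_iff.2 hv0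
  set t : ℝ := (|C| + 1) / ‖v‖
  have hline := hC (t • v) ⟨Multiplicative.ofAdd ⟨t • v, W.smul_mem t hv⟩, fun i => by
    simp [expPiOn, expPi, Complex.norm_exp, hre i], rfl⟩
  rw [norm_smul, Real.norm_of_nonneg (by positivity), div_mul_cancel₀ _ hvpos.ne'] at hline
  linarith [le_abs_self C]

end expPi

/-- Let `W` be a real linear subspace of `ℂ^k` with `W ∩ (2πiℤ)^k = {0}`.  Then `exp(W)`
is closed in `(ℂ*)^k` if and only if `W ∩ (iℝ)^k = {0}`, i.e. the only vector of `W` all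
of whose coordinates are purely imaginary is `0`. -/
theorem isClosed_expPi_image_iff
    (k : ℕ) (W : Submodule ℝ (Fin k → ℂ))
    (hW : ∀ v ∈ W, (∀ i : Fin k, ∃ q : ℤ, v i = 2 * Real.pi * Complex.I * q) → v = 0) :
    IsClosed (expPi '' (W : Set (Fin k → ℂ)) : Set (Fin k → ℂˣ)) ↔
      (∀ v ∈ W, (∀ i : Fin k, (v i).re = 0) → v = 0) :=
  ⟨fun hcl _ hv hre => eq_zero_of_re_eq_zero_of_isClosed_expPi_image hW hcl hv hre,
    isClosed_expPi_image_of_eq_zero_of_re_eq_zero⟩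
end

section
/- Let m, n be positive integers with n ≥ 2m. Let λ_0, …, λ_n ∈ ℤ^{2m}, let A be a 2m×m complex matrix whose associated real 2m×2m matrix (Re A | Im A) is invertible, and set ℓ_i = λ_i A ∈ ℂ^m for each i. Let E be a family of subsets of {0, …, n} of cardinality 2m+1 and let U = U(E). Assume that U is good with respect to the (hol)-action of ℂ^m given by the ℓ_i (i.e. this action on U is proper and U/ℂ^m is compact). Consider the (alg)-action of (ℂ*)^{2m} on ℙ^n(ℂ) given by t·[x_0 : … : x_n] = [t^{λ_0} x_0 : … : t^{λ_n} x_n]. Then U is invariant under this (ℂ*)^{2m}-action, and the orbit space U/(ℂ*)^{2m} is compact and Hausdorff. -/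
open Projectivization
open scoped LinearAlgebra.Projectivization

noncomputable instance {N : ℕ} : TopologicalSpace (ℙ ℂ (Fin N → ℂ)) :=
  inferInstanceAs (TopologicalSpace (Quotient _))

/-- Diagonal scaling of `ℂ^N` by a tuple of nonzero complex numbers,
as a linear automorphism. -/
noncomputable def diagScale {N : ℕ} (c : Fin N → ℂˣ) : (Fin N → ℂ) ≃ₗ[ℂ] (Fin N → ℂ) :=
  LinearEquiv.piCongrRight fun i => LinearEquiv.smulOfUnit (c i)

/-- The induced action of a diagonal scaling on the projective space `ℙ^{N-1}(ℂ)`. -/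
noncomputable def diagAct {N : ℕ} (c : Fin N → ℂˣ) :
    ℙ ℂ (Fin N → ℂ) → ℙ ℂ (Fin N → ℂ) :=
  Projectivization.map (diagScale c).toLinearMap (diagScale c).injective

/-- The open set `U(E) ⊆ ℙ^n(ℂ)` associated with a family `E` of subsets of `{0,…,n}`. -/
def goodSet {N : ℕ} (E : Set (Finset (Fin N))) : Set (ℙ ℂ (Fin N → ℂ)) :=
  {p | ∃ α ∈ E, ∃ (x : Fin N → ℂ) (hx : x ≠ 0),
    Projectivization.mk ℂ x hx = p ∧ ∀ i ∈ α, x i ≠ 0}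

lemma diagAct_mem_goodSet {N : ℕ} {E : Set (Finset (Fin N))} (c : Fin N → ℂˣ)
    {p : ℙ ℂ (Fin N → ℂ)} (hp : p ∈ goodSet E) : diagAct c p ∈ goodSet E := by
  obtain ⟨α, hα, x, hx, rfl, h⟩ := hp
  refine ⟨α, hα, diagScale c x, (diagScale c).map_ne_zero_iff.mpr hx, ?_, ?_⟩
  · exact (Projectivization.map_mk (diagScale c).toLinearMap (diagScale c).injective x hx).symm
  · intro i hi
    exact mul_ne_zero (Units.ne_zero (c i)) (h i hi)

section Actions

variable {m n : ℕ} (lam : Fin (n + 1) → (Fin (2 * m) → ℤ))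
  (A : Matrix (Fin (2 * m)) (Fin m) ℂ)

/-- The row vectors `ℓ_i = λ_i A ∈ ℂ^m`. -/
noncomputable def ell (i : Fin (n + 1)) : Fin m → ℂ :=
  Matrix.vecMul (fun k => ((lam i k : ℤ) : ℂ)) A

/-- The tuple of units `(e^{ℓ_0(z)}, …, e^{ℓ_n(z)})` giving the `(hol)`-action of `ℂ^m`. -/
noncomputable def holUnits (z : Fin m → ℂ) : Fin (n + 1) → ℂˣ :=
  fun i => Units.mk0 (Complex.exp (∑ j : Fin m, ell lam A i j * z j)) (Complex.exp_ne_zero _)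

/-- The restriction of the `(hol)`-action `z·[x] = [e^{ℓ_i(z)} x_i]_i` to `U(E)`. -/
noncomputable def holRest (E : Set (Finset (Fin (n + 1)))) (z : Fin m → ℂ)
    (p : goodSet E) : goodSet E :=
  ⟨diagAct (holUnits lam A z) p.1, diagAct_mem_goodSet _ p.2⟩

/-- The tuple of units `(t^{λ_0}, …, t^{λ_n})`, where `t^{λ_i} = ∏_k t_k^{λ_{i,k}}`,
giving the `(alg)`-action of `(ℂ*)^{2m}`. -/
noncomputable def algUnits (t : Fin (2 * m) → ℂˣ) : Fin (n + 1) → ℂˣ :=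
  fun i => ∏ k : Fin (2 * m), t k ^ lam i k

/-- The `(alg)`-action `t·[x_0 : … : x_n] = [t^{λ_0} x_0 : … : t^{λ_n} x_n]` of
`(ℂ*)^{2m}` on `ℙ^n(ℂ)`. -/
noncomputable def algAct (t : Fin (2 * m) → ℂˣ) :
    ℙ ℂ (Fin (n + 1) → ℂ) → ℙ ℂ (Fin (n + 1) → ℂ) :=
  diagAct (algUnits lam t)

/-- The restriction of the `(alg)`-action to `U(E)`. -/
noncomputable def algRest (E : Set (Finset (Fin (n + 1)))) (t : Fin (2 * m) → ℂˣ)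
    (p : goodSet E) : goodSet E :=
  ⟨algAct lam t p.1, diagAct_mem_goodSet _ p.2⟩

end Actions

/-!
Since `(Re A | Im A)` is invertible, every `t ∈ (ℂ*)^{2m}` factors as `t = c · e^{Az}` with `c` in
the compact torus `(S¹)^{2m}`, and `e^{Az}` acts through the `(alg)`-action exactly as `z` acts
through the `(hol)`-action. Hence every `ℂ^m`-orbit lies in a `(ℂ*)^{2m}`-orbit, and
`U/(ℂ*)^{2m}` is a continuous image of the compact space `U/ℂ^m`. The graph of the
`(ℂ*)^{2m}`-orbit relation is the projection along the compact factor `(S¹)^{2m}` of a preimage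
of the graph of the `ℂ^m`-orbit relation, which is closed because the `(hol)`-action is proper.
Quotient maps by group actions are open, so a closed orbit relation gives a Hausdorff quotient.
-/

open Topology
open scoped Matrix

section OrbitRelation

variable {G X : Type*} [Group G] [MulAction G X] [TopologicalSpace X]

theorem t2Space_quot_iff_isClosed_setOf_exists_smul_eq [ContinuousConstSMul G X] :
    T2Space (Quot fun p q : X => ∃ g : G, g • p = q) ↔
      IsClosed {pq : X × X | ∃ g : G, g • pq.1 = pq.2} := by
  have horbit : (fun p q : X => ∃ g : G, g • p = q) = (MulAction.orbitRel G X).r := by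
    ext p q
    rw [MulAction.orbitRel_apply, MulAction.mem_orbit_symm]
    rfl
  rw [horbit]
  change T2Space (Quotient (MulAction.orbitRel G X)) ↔ _
  rw [t2Space_iff_of_isOpenQuotientMap MulAction.isOpenQuotientMap_quotientMk]
  simp only [Quotient.eq, MulAction.orbitRel_apply, MulAction.mem_orbit_symm (a₁ := Prod.fst _)]
  rfl

theorem isClosed_setOf_exists_smul_eq_of_compact_mul [TopologicalSpace G] [ContinuousInv G]
    [ContinuousSMul G X] {K Y : Type*} [TopologicalSpace K] [CompactSpace K] {κ : K → G}
    (hκ : Continuous κ) (ι : Y → G) (hdecomp : ∀ g, ∃ k y, κ k * ι y = g)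
    (hclosed : IsClosed {pq : X × X | ∃ y, ι y • pq.1 = pq.2}) :
    IsClosed {pq : X × X | ∃ g : G, g • pq.1 = pq.2} := by
  have hproj : {pq : X × X | ∃ g : G, g • pq.1 = pq.2} = Prod.snd ''
      ((fun kpq : K × (X × X) => (kpq.2.1, (κ kpq.1)⁻¹ • kpq.2.2)) ⁻¹'
        {pq : X × X | ∃ y, ι y • pq.1 = pq.2}) := by
    ext ⟨p, q⟩
    constructor
    · rintro ⟨g, rfl : g • p = q⟩
      obtain ⟨k, y, rfl⟩ := hdecomp g
      exact ⟨(k, p, (κ k * ι y) • p), ⟨y, by simp [mul_smul]⟩, rfl⟩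
    · rintro ⟨⟨k, p, q⟩, ⟨y, hy⟩, ⟨⟩⟩
      exact ⟨κ k * ι y, by rw [mul_smul, hy, smul_inv_smul]⟩
  rw [hproj]
  exact isClosedMap_snd_of_compactSpace _ (hclosed.preimage (by fun_prop))

end OrbitRelation

theorem isClosed_setOf_exists_eq_of_isClosedMap {Y X : Type*} [TopologicalSpace Y]
    [TopologicalSpace X] {f : Y → X → X} (hf : IsClosedMap fun q : Y × X => (f q.1 q.2, q.2)) :
    IsClosed {pq : X × X | ∃ y, f y pq.1 = pq.2} := by
  have hswap : {pq : X × X | ∃ y, f y pq.1 = pq.2} =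
      Prod.swap ⁻¹' Set.range fun q : Y × X => (f q.1 q.2, q.2) := by
    ext ⟨p, q⟩
    simp
  rw [hswap]
  exact hf.isClosed_range.preimage continuous_swap

theorem Quot.compactSpace_of_imp {X : Type*} [TopologicalSpace X] {r s : X → X → Prop}
    (hrs : ∀ ⦃p q⦄, r p q → s p q) [CompactSpace (Quot r)] : CompactSpace (Quot s) :=
  Function.Surjective.compactSpace (continuous_quot_lift _ continuous_quot_mk)
    ((Quot.surjective_lift (r := r) (f := Quot.mk s) fun _ _ h => Quot.sound (hrs h)).mpr
      Quot.mk_surjective)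

section DiagonalTorus

open Projectivization

variable {N : ℕ}

-- Makes Mathlib's action on `ℙ` of groups acting `ℂ`-linearly apply to the diagonal torus.
instance : SMulCommClass (Fin N → ℂˣ) ℂ (Fin N → ℂ) := .symm _ _ _

theorem isOpenQuotientMap_mk' :
    IsOpenQuotientMap (mk' ℂ : {v : Fin N → ℂ // v ≠ 0} → ℙ ℂ (Fin N → ℂ)) := by
  have hquot : IsQuotientMap (mk' ℂ : {v : Fin N → ℂ // v ≠ 0} → ℙ ℂ (Fin N → ℂ)) :=
    isQuotientMap_quot_mk
  refine ⟨Quot.mk_surjective, hquot.continuous, fun U hU => ?_⟩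
  have hsat : mk' ℂ ⁻¹' (mk' ℂ '' U) = ⋃ a : ℂˣ, (a • ·) ⁻¹' U := by
    ext v
    simp only [Set.mem_preimage, Set.mem_image, Set.mem_iUnion, mk'_eq_mk, mk_eq_mk_iff]
    constructor
    · rintro ⟨u, hu, a, hau⟩
      exact ⟨a, by convert hu using 1; exact Subtype.ext hau⟩
    · rintro ⟨a, ha⟩
      exact ⟨a • v, ha, a, rfl⟩
  rw [← hquot.isOpen_preimage, hsat]
  exact isOpen_iUnion fun a => hU.preimage ((continuous_subtype_val.const_smul a).subtype_mk _)

instance : ContinuousSMul (Fin N → ℂˣ) (ℙ ℂ (Fin N → ℂ)) := by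
  refine ⟨(IsOpenQuotientMap.id.prodMap isOpenQuotientMap_mk').isQuotientMap.continuous_iff.mpr
    ?_⟩
  have hlift : (fun cp : (Fin N → ℂˣ) × ℙ ℂ (Fin N → ℂ) => cp.1 • cp.2) ∘ Prod.map id (mk' ℂ) =
      fun cv => mk' ℂ ⟨cv.1 • cv.2.1, (smul_ne_zero_iff_ne _).mpr cv.2.2⟩ := rfl
  rw [hlift]
  exact continuous_quot_mk.comp
    ((continuous_fst.smul (continuous_subtype_val.comp continuous_snd)).subtype_mk _)

variable (E : Set (Finset (Fin N)))

noncomputable instance : MulAction (Fin N → ℂˣ) (goodSet E) where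
  smul c p := ⟨c • p.1, diagAct_mem_goodSet c p.2⟩
  one_smul p := Subtype.ext (one_smul _ p.1)
  mul_smul c d p := Subtype.ext (mul_smul c d p.1)

instance : ContinuousSMul (Fin N → ℂˣ) (goodSet E) :=
  ⟨(continuous_fst.smul (continuous_subtype_val.comp continuous_snd)).subtype_mk _⟩

end DiagonalTorus

theorem Circle.continuous_toUnits : Continuous Circle.toUnits :=
  Units.continuous_iff.mpr
    ⟨continuous_subtype_val, continuous_subtype_val.comp (continuous_inv (G := Circle))⟩

section Torus

variable {m n : ℕ} (lam : Fin (n + 1) → (Fin (2 * m) → ℤ)) (A : Matrix (Fin (2 * m)) (Fin m) ℂ)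

noncomputable def algUnitsHom : (Fin (2 * m) → ℂˣ) →* (Fin (n + 1) → ℂˣ) where
  toFun := algUnits lam
  map_one' := by
    funext i
    simp [algUnits]
  map_mul' t s := by
    funext i
    simp [algUnits, mul_zpow, Finset.prod_mul_distrib]

theorem continuous_algUnits : Continuous (algUnits lam) :=
  continuous_pi fun _ => continuous_finsetProd _ fun k _ => (continuous_apply k).zpow _

noncomputable def expMulVec (z : Fin m → ℂ) : Fin (2 * m) → ℂˣ :=
  fun k => Units.mk0 (Complex.exp ((A *ᵥ z) k)) (Complex.exp_ne_zero _)

theorem algUnits_expMulVec (z : Fin m → ℂ) : algUnits lam (expMulVec A z) = holUnits lam A z := by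
  funext i
  ext
  simp only [algUnits, holUnits, expMulVec, Units.coe_prod, Units.val_zpow_eq_zpow_val,
    Units.val_mk0, ← Complex.exp_int_mul, ← Complex.exp_sum]
  exact congrArg Complex.exp (Matrix.dotProduct_mulVec (fun k => (lam i k : ℂ)) A z)

theorem re_mulVec_eq_reImMat_mulVec (w : Fin (2 * m) → ℝ) (k : Fin (2 * m)) :
    ((A *ᵥ fun j => (w ⟨j, by omega⟩ : ℂ) - w ⟨m + j, by omega⟩ * Complex.I) k).re =
      (reImMat A *ᵥ w) k := by
  simp only [Matrix.mulVec, dotProduct, Complex.re_sum]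
  rw [← Fin.sum_congr' _ (two_mul m).symm, Fin.sum_univ_add, ← Finset.sum_add_distrib]
  refine Finset.sum_congr rfl fun j _ => ?_
  have hlow : Fin.cast (two_mul m).symm (Fin.castAdd m j) = ⟨j, by omega⟩ := rfl
  have hhigh : Fin.cast (two_mul m).symm (Fin.natAdd m j) = ⟨m + j, by omega⟩ := rfl
  rw [hlow, hhigh]
  simp [reImMat]

theorem exists_re_mulVec_eq (hA : IsUnit (reImMat A)) (r : Fin (2 * m) → ℝ) :
    ∃ z : Fin m → ℂ, ∀ k, ((A *ᵥ z) k).re = r k := by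
  obtain ⟨B, hB⟩ := hA.exists_right_inv
  refine ⟨_, fun k => (re_mulVec_eq_reImMat_mulVec A (B *ᵥ r) k).trans ?_⟩
  rw [Matrix.mulVec_mulVec, hB, Matrix.one_mulVec]

theorem exists_circle_mul_expMulVec (hA : IsUnit (reImMat A)) (t : Fin (2 * m) → ℂˣ) :
    ∃ (c : Fin (2 * m) → Circle) (z : Fin m → ℂ),
      (fun k => Circle.toUnits (c k)) * expMulVec A z = t := by
  obtain ⟨z, hz⟩ := exists_re_mulVec_eq A hA fun k => Real.log ‖(t k : ℂ)‖
  have hnorm (k : Fin (2 * m)) : ‖(t k : ℂ) / Complex.exp ((A *ᵥ z) k)‖ = 1 := by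
    have ht : 0 < ‖(t k : ℂ)‖ := norm_pos_iff.mpr (t k).ne_zero
    rw [norm_div, Complex.norm_exp, hz k, Real.exp_log ht, div_self ht.ne']
  refine ⟨fun k => ⟨_, mem_sphere_zero_iff_norm.mpr (hnorm k)⟩, z, ?_⟩
  funext k
  ext
  simp only [Pi.mul_apply, Units.val_mul, Units.val_mk0, expMulVec]
  exact div_mul_cancel₀ _ (Complex.exp_ne_zero _)

end Torus

theorem alg_quotient_compact_hausdorff_general
    (m n : ℕ)
    (lam : Fin (n + 1) → (Fin (2 * m) → ℤ))
    (A : Matrix (Fin (2 * m)) (Fin m) ℂ) (hA : IsUnit (reImMat A))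
    (E : Set (Finset (Fin (n + 1))))
    (hproper : IsProperMap (fun q : (Fin m → ℂ) × (goodSet E) =>
        ((holRest lam A E q.1 q.2 : goodSet E), q.2)))
    (hcompact : CompactSpace
        (Quot (fun p q : goodSet E => ∃ z : Fin m → ℂ, holRest lam A E z p = q))) :
    (∀ (t : Fin (2 * m) → ℂˣ) (p : ℙ ℂ (Fin (n + 1) → ℂ)),
        p ∈ goodSet E → algAct lam t p ∈ goodSet E) ∧
    CompactSpace
      (Quot (fun p q : goodSet E => ∃ t : Fin (2 * m) → ℂˣ, algRest lam E t p = q)) ∧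
    T2Space
      (Quot (fun p q : goodSet E => ∃ t : Fin (2 * m) → ℂˣ, algRest lam E t p = q)) := by
  have hhol (z : Fin m → ℂ) (p : goodSet E) :
      algRest lam E (expMulVec A z) p = holRest lam A E z p :=
    Subtype.ext (congrArg (diagAct · p.1) (algUnits_expMulVec lam A z))
  have hsub (p q : goodSet E) :
      (∃ z, holRest lam A E z p = q) → ∃ t, algRest lam E t p = q :=
    fun ⟨z, hz⟩ => ⟨expMulVec A z, (hhol z p).trans hz⟩
  refine ⟨fun t p hp => diagAct_mem_goodSet _ hp, Quot.compactSpace_of_imp hsub, ?_⟩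
  -- With this action, `algRest lam E t p` is definitionally `t • p`.
  let _ : MulAction (Fin (2 * m) → ℂˣ) (goodSet E) := .compHom _ (algUnitsHom lam)
  have : ContinuousSMul (Fin (2 * m) → ℂˣ) (goodSet E) :=
    MulAction.continuousSMul_compHom (continuous_algUnits lam)
  refine t2Space_quot_iff_isClosed_setOf_exists_smul_eq.mpr
    (isClosed_setOf_exists_smul_eq_of_compact_mul
      (continuous_pi fun k => Circle.continuous_toUnits.comp (continuous_apply k))
      (expMulVec A) (exists_circle_mul_expMulVec A hA) ?_)
  change IsClosed {pq : goodSet E × goodSet E | ∃ z, algRest lam E (expMulVec A z) pq.1 = pq.2}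
  simpa only [hhol] using isClosed_setOf_exists_eq_of_isClosedMap hproper.isClosedMap

/-- Let `n ≥ 2m ≥ 2`, let `λ_0, …, λ_n ∈ ℤ^{2m}`, let `A` be a `2m × m` complex matrix
with `(Re A | Im A)` invertible, set `ℓ_i = λ_i A`, and let `E` be a family of subsets of
`{0,…,n}` of cardinality `2m+1` with `U = U(E)`.  If `U` is good with respect to the
`(hol)`-action of `ℂ^m` given by the `ℓ_i` (the action is proper and `U/ℂ^m` is compact),
then `U` is invariant under the `(alg)`-action `t·[x] = [t^{λ_i} x_i]_i` of `(ℂ*)^{2m}`,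
and the orbit space `U/(ℂ*)^{2m}` is compact and Hausdorff. -/
theorem alg_quotient_compact_hausdorff
    (m n : ℕ) (hm : 0 < m) (hn : 2 * m ≤ n)
    (lam : Fin (n + 1) → (Fin (2 * m) → ℤ))
    (A : Matrix (Fin (2 * m)) (Fin m) ℂ) (hA : IsUnit (reImMat A))
    (E : Set (Finset (Fin (n + 1)))) (hE : ∀ α ∈ E, α.card = 2 * m + 1)
    (hproper : IsProperMap (fun q : (Fin m → ℂ) × (goodSet E) =>
        ((holRest lam A E q.1 q.2 : goodSet E), q.2)))
    (hcompact : CompactSpace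
        (Quot (fun p q : goodSet E => ∃ z : Fin m → ℂ, holRest lam A E z p = q))) :
    (∀ (t : Fin (2 * m) → ℂˣ) (p : ℙ ℂ (Fin (n + 1) → ℂ)),
        p ∈ goodSet E → algAct lam t p ∈ goodSet E) ∧
    CompactSpace
      (Quot (fun p q : goodSet E => ∃ t : Fin (2 * m) → ℂˣ, algRest lam E t p = q)) ∧
    T2Space
      (Quot (fun p q : goodSet E => ∃ t : Fin (2 * m) → ℂˣ, algRest lam E t p = q)) :=
  alg_quotient_compact_hausdorff_general m n lam A hA E hproper hcompact
end
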